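/- Let Z and X be metric spaces with their Borel σ-algebras, g : Z → X a continuous map, u a finite Borel measure on Z, λ a σ-finite Borel measure on X, and q, h : X → [0,∞) Borel measurable functions such that the pushforward measure g_*u equals λ.withDensity q and such that h(x) = 0 for λ-almost every x with q(x) = 0. Set γ := λ.withDensity h and assume γ is a finite measure. Let L ≥ 1 with finite index sets I_ℓ, measurable partitions {B_{ℓ,i}}_{i∈I_ℓ} of Z, finite measures φ^R_{ℓ,i} on Z, and combination weights k^R_ℓ ≥ 0 with Σ_ℓ k^R_ℓ > 0 for every R. Suppose there is a nonempty L₀ ⊆ {1,…,L} such that: for every ℓ ∈ L₀ and i ∈ I_ℓ, φ^R_{ℓ,i} converges weakly, as R → ∞, to the measure u.withDensity(z ↦ 1_{B_{ℓ,i}}(z) · h(g(z)) / q(g(z))), and k^R_ℓ → ∞; while for ℓ ∉ L₀ both k^R_ℓ and φ^R_{ℓ,i}(Z) stay bounded in R. Then the combined pushforward measure (Σ_ℓ k^R_ℓ)⁻¹ · Σ_ℓ k^R_ℓ · Σ_{i∈I_ℓ} g_*(φ^R_{ℓ,i}) converges weakly to γ as R → ∞. -/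

import Mathlib

/-!
The limit densities `1_{B ℓ i} · (h / q) ∘ g` of level `ℓ` add up to `(h / q) ∘ g`, and
`u.withDensity ((h / q) ∘ g)` pushes forward to `(λ.withDensity q).withDensity (h / q) = γ`; the
last equality holds because `h = 0` almost everywhere where `q = 0`. Hence for `ℓ ∈ L₀` the
pushed-forward level estimators `∑ i, g_* φ R ℓ i` converge weakly to `γ`. Integrated against a
bounded continuous `f`, the combined measure gives the weighted average of the level integrals.
The total weight tends to infinity while the levels outside `L₀` keep bounded weight and mass, so
their share of the average vanishes and the average tends to `∫ f dγ`.
-/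

open MeasureTheory Filter Topology
open scoped NNReal ENNReal BoundedContinuousFunction

/-- Weak convergence of a sequence of (finite Borel) measures: convergence of integrals of
all bounded continuous real-valued functions. -/
def WeakConv {X : Type*} [MeasurableSpace X] [TopologicalSpace X]
    (μ : ℕ → Measure X) (ν : Measure X) : Prop :=
  ∀ f : X →ᵇ ℝ,
    Tendsto (fun n => ∫ x, f x ∂(μ n)) atTop (𝓝 (∫ x, f x ∂ν))

theorem inv_sum_mul_sum_sub_eq {ι : Type*} (s : Finset ι) (w a : ι → ℝ) (c : ℝ)
    (hw : ∑ i ∈ s, w i ≠ 0) :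
    (∑ i ∈ s, w i)⁻¹ * ∑ i ∈ s, w i * a i - c =
      ∑ i ∈ s, w i / (∑ j ∈ s, w j) * (a i - c) := by
  simp only [div_mul_eq_mul_div, ← Finset.sum_div, mul_sub, Finset.sum_sub_distrib,
    ← Finset.sum_mul]
  field_simp

theorem tendsto_inv_sum_mul_sum_of_dominant {ι : Type*} [Fintype ι] (w : ℕ → ι → ℝ≥0)
    (a : ℕ → ι → ℝ) (s : Set ι) (c : ℝ)
    (hs : ∃ i ∈ s, Tendsto (w · i) atTop atTop)
    (ha : ∀ i ∈ s, Tendsto (a · i) atTop (𝓝 c))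
    (hw : ∀ i ∉ s, ∃ C : ℝ≥0, ∀ n, w n i ≤ C)
    (hab : ∀ i ∉ s, ∃ C : ℝ, ∀ n, |a n i| ≤ C) :
    Tendsto (fun n => (∑ i, (w n i : ℝ))⁻¹ * ∑ i, (w n i : ℝ) * a n i) atTop (𝓝 c) := by
  set S : ℕ → ℝ := fun n => ∑ i, (w n i : ℝ)
  have hw_le_S : ∀ n i, (w n i : ℝ) ≤ S n := fun n i =>
    Finset.single_le_sum (fun j _ => (w n j).coe_nonneg) (Finset.mem_univ i)
  have hS : Tendsto S atTop atTop := by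
    obtain ⟨i₀, -, hi₀⟩ := hs
    exact tendsto_atTop_mono (hw_le_S · i₀) (NNReal.tendsto_coe_atTop.mpr hi₀)
  have hS_nonneg : ∀ n, 0 ≤ S n := fun n => Finset.sum_nonneg fun i _ => (w n i).coe_nonneg
  have hratio_nonneg : ∀ n i, 0 ≤ (w n i : ℝ) / S n := fun n i =>
    div_nonneg (w n i).coe_nonneg (hS_nonneg n)
  have hratio_bdd : ∀ i, IsBoundedUnder (· ≤ ·) atTop (fun n => ‖(w n i : ℝ) / S n‖) :=
    fun i => isBoundedUnder_of ⟨1, fun n => by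
      rw [Real.norm_of_nonneg (hratio_nonneg n i)]
      exact div_le_one_of_le₀ (hw_le_S n i) (hS_nonneg n)⟩
  have hterm : ∀ i, Tendsto (fun n => (w n i : ℝ) / S n * (a n i - c)) atTop (𝓝 0) := by
    intro i
    by_cases hi : i ∈ s
    · exact isBoundedUnder_le_mul_tendsto_zero (hratio_bdd i)
        (by simpa using (ha i hi).sub_const c)
    · obtain ⟨C, hC⟩ := hw i hi
      obtain ⟨D, hD⟩ := hab i hi
      have hratio : Tendsto (fun n => (w n i : ℝ) / S n) atTop (𝓝 0) :=
        squeeze_zero (hratio_nonneg · i)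
          (fun n => div_le_div_of_nonneg_right (hC n) (hS_nonneg n))
          (by simpa [div_eq_mul_inv] using hS.inv_tendsto_atTop.const_mul (C : ℝ))
      refine hratio.zero_mul_isBoundedUnder_le (isBoundedUnder_of ⟨D + |c|, fun n => ?_⟩)
      exact (norm_sub_le _ _).trans (add_le_add (hD n) le_rfl)
  have hsum : Tendsto (fun n => ∑ i, (w n i : ℝ) / S n * (a n i - c)) atTop (𝓝 0) := by
    simpa using tendsto_finsetSum Finset.univ fun i _ => hterm i
  rw [← tendsto_sub_nhds_zero_iff]
  refine hsum.congr' ?_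
  filter_upwards [hS.eventually_gt_atTop 0] with n hn
  exact (inv_sum_mul_sum_sub_eq _ _ _ c hn.ne').symm

namespace MeasureTheory

theorem withDensity_finsetSum {α ι : Type*} [MeasurableSpace α] (μ : Measure α) (s : Finset ι)
    {f : ι → α → ℝ≥0∞} (hf : ∀ i ∈ s, Measurable (f i)) :
    μ.withDensity (∑ i ∈ s, f i) = ∑ i ∈ s, μ.withDensity (f i) := by
  ext t ht
  simp only [withDensity_apply _ ht, Measure.finsetSum_apply, Finset.sum_apply]
  exact lintegral_finsetSum _ hf

theorem withDensity_eq_sum_withDensity_indicator {α ι : Type*} [MeasurableSpace α] [Fintype ι]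
    (μ : Measure α) {B : ι → Set α} (hBmeas : ∀ i, MeasurableSet (B i))
    (hBdisj : Pairwise fun i j => Disjoint (B i) (B j)) (hBcover : ⋃ i, B i = Set.univ)
    {f : α → ℝ≥0∞} (hf : Measurable f) :
    μ.withDensity f = ∑ i, μ.withDensity ((B i).indicator f) := by
  have hsum : ∑ i, (B i).indicator f = f := by
    ext x
    rw [Finset.sum_apply, ← Finset.indicator_biUnion_apply _ _ (hBdisj.set_pairwise _)]
    simp [hBcover]
  rw [← withDensity_finsetSum μ _ fun i _ => hf.indicator (hBmeas i), hsum]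

theorem map_withDensity_comp {α β : Type*} [MeasurableSpace α] [MeasurableSpace β]
    (μ : Measure α) {g : α → β} (hg : Measurable g) {f : β → ℝ≥0∞} (hf : Measurable f) :
    (μ.withDensity fun a => f (g a)).map g = (μ.map g).withDensity f := by
  ext s hs
  rw [Measure.map_apply hg hs, withDensity_apply _ (hg hs), withDensity_apply _ hs,
    setLIntegral_map hs hf hg]

theorem withDensity_withDensity_div_eq {α : Type*} [MeasurableSpace α] (μ : Measure α)
    {q h : α → ℝ≥0} (hq : Measurable q) (hh : Measurable h)
    (hzero : ∀ᵐ x ∂μ, q x = 0 → h x = 0) :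
    (μ.withDensity fun x => (q x : ℝ≥0∞)).withDensity (fun x => ((h x / q x : ℝ≥0) : ℝ≥0∞)) =
      μ.withDensity fun x => (h x : ℝ≥0∞) := by
  rw [← withDensity_mul _ hq.coe_nnreal_ennreal (g := fun x => ((h x / q x : ℝ≥0) : ℝ≥0∞))
    (hh.div hq).coe_nnreal_ennreal]
  refine withDensity_congr_ae ?_
  filter_upwards [hzero] with x hx
  rcases eq_or_ne (q x) 0 with h0 | h0
  · simp [h0, hx h0]
  · simp [← ENNReal.coe_mul, mul_div_cancel₀ _ h0]

theorem Measure.map_finsetSum {α β ι : Type*} [MeasurableSpace α] [MeasurableSpace β]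
    {g : α → β} (hg : Measurable g) (s : Finset ι) (μ : ι → Measure α) :
    (∑ i ∈ s, μ i).map g = ∑ i ∈ s, (μ i).map g := by
  simp only [← mapₗ_apply_of_measurable hg, _root_.map_sum]

end MeasureTheory

section WeakConv

variable {X : Type*} [MeasurableSpace X] [TopologicalSpace X] [OpensMeasurableSpace X]

theorem integral_inv_sum_smul_sum_measure {ι : Type*} [Fintype ι] (μ : ι → Measure X)
    [∀ i, IsFiniteMeasure (μ i)] (w : ι → ℝ≥0) (f : X →ᵇ ℝ) :
    ∫ x, f x ∂((∑ i, w i)⁻¹ • ∑ i, w i • μ i) =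
      (∑ i, (w i : ℝ))⁻¹ * ∑ i, (w i : ℝ) * ∫ x, f x ∂(μ i) := by
  rw [integral_smul_nnreal_measure, integral_finsetSum_measure fun i _ =>
    (f.integrable (μ i)).smul_measure_nnreal]
  simp [integral_smul_nnreal_measure, NNReal.smul_def]

theorem WeakConv.finsetSum {ι : Type*} [Fintype ι] {μ : ℕ → ι → Measure X}
    [∀ n i, IsFiniteMeasure (μ n i)] {ν : ι → Measure X} [∀ i, IsFiniteMeasure (ν i)]
    (h : ∀ i, WeakConv (μ · i) (ν i)) :
    WeakConv (fun n => ∑ i, μ n i) (∑ i, ν i) := by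
  intro f
  simp only [integral_finsetSum_measure fun i _ => f.integrable _]
  exact tendsto_finsetSum _ fun i _ => h i f

theorem WeakConv.inv_sum_smul_sum_of_dominant {ι : Type*} [Fintype ι]
    {μ : ℕ → ι → Measure X} [∀ n i, IsFiniteMeasure (μ n i)] {ν : Measure X}
    (w : ℕ → ι → ℝ≥0) (s : Set ι)
    (hs : ∃ i ∈ s, Tendsto (w · i) atTop atTop)
    (hconv : ∀ i ∈ s, WeakConv (μ · i) ν)
    (hw : ∀ i ∉ s, ∃ C : ℝ≥0, ∀ n, w n i ≤ C)
    (hμ : ∀ i ∉ s, ∃ C : ℝ≥0, ∀ n, μ n i Set.univ ≤ C) :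
    WeakConv (fun n => (∑ i, w n i)⁻¹ • ∑ i, w n i • μ n i) ν := by
  intro f
  simp only [integral_inv_sum_smul_sum_measure]
  refine tendsto_inv_sum_mul_sum_of_dominant w _ s _ hs (fun i hi => hconv i hi f) hw
    fun i hi => ?_
  obtain ⟨C, hC⟩ := hμ i hi
  refine ⟨C * ‖f‖, fun n => (f.norm_integral_le_mul_norm _).trans ?_⟩
  gcongr
  exact ENNReal.toReal_le_of_le_ofReal C.coe_nonneg (by simpa using hC n)

end WeakConv

theorem WeakConv.map {Z X : Type*} [MeasurableSpace Z] [TopologicalSpace Z]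
    [OpensMeasurableSpace Z] [MeasurableSpace X] [TopologicalSpace X] [BorelSpace X]
    {μ : ℕ → Measure Z} {ν : Measure Z} (h : WeakConv μ ν) {g : Z → X} (hg : Continuous g) :
    WeakConv (fun n => (μ n).map g) (ν.map g) := by
  intro f
  simp only [integral_map hg.measurable.aemeasurable
    f.continuous.stronglyMeasurable.aestronglyMeasurable]
  exact h (f.compContinuous ⟨g, hg⟩)

theorem reparameterized_combined_estimator_weak_convergence_general
    {Z X : Type*} [MetricSpace Z] [MeasurableSpace Z] [BorelSpace Z]
    [MetricSpace X] [MeasurableSpace X] [BorelSpace X]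
    (g : Z → X) (hg : Continuous g)
    (u : Measure Z)
    (lam : Measure X)
    (q h : X → ℝ≥0) (hq : Measurable q) (hh : Measurable h)
    (hpush : Measure.map g u = lam.withDensity fun x => (q x : ℝ≥0∞))
    (hzero : ∀ᵐ x ∂lam, q x = 0 → h x = 0)
    (γ : Measure X) (hγdef : γ = lam.withDensity fun x => (h x : ℝ≥0∞))
    [IsFiniteMeasure γ]
    (L : ℕ)
    (ι : Fin L → Type*) [∀ ℓ, Fintype (ι ℓ)]
    (B : ∀ ℓ : Fin L, ι ℓ → Set Z)
    (hBmeas : ∀ ℓ i, MeasurableSet (B ℓ i))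
    (hBdisj : ∀ ℓ, Pairwise fun i j => Disjoint (B ℓ i) (B ℓ j))
    (hBcover : ∀ ℓ, (⋃ i, B ℓ i) = Set.univ)
    (φ : ℕ → ∀ ℓ : Fin L, ι ℓ → Measure Z)
    (hφfin : ∀ R ℓ i, IsFiniteMeasure (φ R ℓ i))
    (k : ℕ → Fin L → ℝ≥0)
    (L₀ : Set (Fin L)) (hL₀ : L₀.Nonempty)
    (ha : ∀ ℓ ∈ L₀, ∀ i, WeakConv (fun R => φ R ℓ i)
      (u.withDensity fun z =>
        Set.indicator (B ℓ i) (fun z' => ((h (g z') / q (g z') : ℝ≥0) : ℝ≥0∞)) z))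
    (hb : ∀ ℓ ∈ L₀, Tendsto (fun R => k R ℓ) atTop atTop)
    (hc₁ : ∀ ℓ ∉ L₀, ∃ C : ℝ≥0, ∀ R, k R ℓ ≤ C)
    (hc₂ : ∀ ℓ ∉ L₀, ∃ C : ℝ≥0, ∀ R (i : ι ℓ), φ R ℓ i Set.univ ≤ (C : ℝ≥0∞)) :
    WeakConv (fun R => (∑ ℓ, k R ℓ)⁻¹ • ∑ ℓ, k R ℓ • ∑ i, Measure.map g (φ R ℓ i)) γ := by
  have hgm : Measurable g := hg.measurable
  set ρ : Z → ℝ≥0∞ := fun z => ((h (g z) / q (g z) : ℝ≥0) : ℝ≥0∞)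
  have hlim : ∀ ℓ, ∑ i, (u.withDensity fun z => (B ℓ i).indicator ρ z).map g = γ := fun ℓ => by
    have hD : Measurable fun x => ((h x / q x : ℝ≥0) : ℝ≥0∞) := (hh.div hq).coe_nnreal_ennreal
    rw [← Measure.map_finsetSum hgm, ← withDensity_eq_sum_withDensity_indicator u (hBmeas ℓ)
      (hBdisj ℓ) (hBcover ℓ) (f := ρ) (hD.comp hgm), map_withDensity_comp u hgm hD, hpush,
      withDensity_withDensity_div_eq lam hq hh hzero, hγdef]
  have hlim_fin : ∀ ℓ i, IsFiniteMeasure ((u.withDensity fun z => (B ℓ i).indicator ρ z).map g) :=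
    fun ℓ i => isFiniteMeasure_of_le γ <| (hlim ℓ).le.trans'
      (Finset.single_le_sum (fun _ _ => Measure.zero_le _) (Finset.mem_univ i))
  refine WeakConv.inv_sum_smul_sum_of_dominant k L₀ (hL₀.imp fun ℓ hℓ => ⟨hℓ, hb ℓ hℓ⟩)
    (fun ℓ hℓ => hlim ℓ ▸ WeakConv.finsetSum fun i => (ha ℓ hℓ i).map hg) hc₁ fun ℓ hℓ => ?_
  obtain ⟨C, hC⟩ := hc₂ ℓ hℓ
  refine ⟨Fintype.card (ι ℓ) * C, fun R => ?_⟩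
  calc (∑ i, (φ R ℓ i).map g) Set.univ = ∑ i, φ R ℓ i Set.univ := by
        simp [Measure.map_apply hgm MeasurableSet.univ]
    _ ≤ ∑ _ : ι ℓ, (C : ℝ≥0∞) := Finset.sum_le_sum fun i _ => hC R i
    _ = (Fintype.card (ι ℓ) * C : ℝ≥0) := by simp

theorem reparameterized_combined_estimator_weak_convergence
    {Z X : Type*} [MetricSpace Z] [MeasurableSpace Z] [BorelSpace Z]
    [MetricSpace X] [MeasurableSpace X] [BorelSpace X]
    (g : Z → X) (hg : Continuous g)
    (u : Measure Z) [IsFiniteMeasure u]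
    (lam : Measure X) [SigmaFinite lam]
    (q h : X → ℝ≥0) (hq : Measurable q) (hh : Measurable h)
    (hpush : Measure.map g u = lam.withDensity fun x => (q x : ℝ≥0∞))
    (hzero : ∀ᵐ x ∂lam, q x = 0 → h x = 0)
    (γ : Measure X) (hγdef : γ = lam.withDensity fun x => (h x : ℝ≥0∞))
    [IsFiniteMeasure γ]
    (L : ℕ) (hL : 1 ≤ L)
    (ι : Fin L → Type*) [∀ ℓ, Fintype (ι ℓ)]
    (B : ∀ ℓ : Fin L, ι ℓ → Set Z)
    (hBmeas : ∀ ℓ i, MeasurableSet (B ℓ i))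
    (hBdisj : ∀ ℓ, Pairwise fun i j => Disjoint (B ℓ i) (B ℓ j))
    (hBcover : ∀ ℓ, (⋃ i, B ℓ i) = Set.univ)
    (φ : ℕ → ∀ ℓ : Fin L, ι ℓ → Measure Z)
    (hφfin : ∀ R ℓ i, IsFiniteMeasure (φ R ℓ i))
    (k : ℕ → Fin L → ℝ≥0)
    (hkpos : ∀ R, 0 < ∑ ℓ, k R ℓ)
    (L₀ : Set (Fin L)) (hL₀ : L₀.Nonempty)
    (ha : ∀ ℓ ∈ L₀, ∀ i, WeakConv (fun R => φ R ℓ i)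
      (u.withDensity fun z =>
        Set.indicator (B ℓ i) (fun z' => ((h (g z') / q (g z') : ℝ≥0) : ℝ≥0∞)) z))
    (hb : ∀ ℓ ∈ L₀, Tendsto (fun R => k R ℓ) atTop atTop)
    (hc₁ : ∀ ℓ ∉ L₀, ∃ C : ℝ≥0, ∀ R, k R ℓ ≤ C)
    (hc₂ : ∀ ℓ ∉ L₀, ∃ C : ℝ≥0, ∀ R (i : ι ℓ), φ R ℓ i Set.univ ≤ (C : ℝ≥0∞)) :
    WeakConv (fun R => (∑ ℓ, k R ℓ)⁻¹ • ∑ ℓ, k R ℓ • ∑ i, Measure.map g (φ R ℓ i)) γ :=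
  reparameterized_combined_estimator_weak_convergence_general g hg u lam q h hq hh hpush hzero γ
    hγdef L ι B hBmeas hBdisj hBcover φ hφfin k L₀ hL₀ ha hb hc₁ hc₂
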